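/- Let Λ be an artin algebra. Then the subcategory C_Λ = Gen(Q̃) ∩ Cogen(Q̃) contains a (classical) tilting Λ-module if and only if the dominant dimension of Λ is at least 2. -/

import Mathlib

open Function LinearMap

section Prelim

variable (Λ : Type) [Ring Λ]

/-- A module that is both projective and injective. -/
def IsProjInj (M : Type) [AddCommGroup M] [Module Λ M] : Prop :=
  Module.Projective Λ M ∧ Module.Injective Λ M

/-- `X` is generated by the projective-injective modules: it is a quotient of a
finitely generated projective-injective module (equivalently, of a finite direct sum of
copies of `Q̃`). -/
def GenByProjInj (X : Type) [AddCommGroup X] [Module Λ X] : Prop :=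
  ∃ Q : ModuleCat.{0} Λ, Module.Finite Λ Q ∧ IsProjInj Λ Q ∧
    ∃ f : Q →ₗ[Λ] X, Surjective f

/-- `X` is cogenerated by the projective-injective modules: it embeds into a
finitely generated projective-injective module. -/
def CogenByProjInj (X : Type) [AddCommGroup X] [Module Λ X] : Prop :=
  ∃ Q : ModuleCat.{0} Λ, Module.Finite Λ Q ∧ IsProjInj Λ Q ∧
    ∃ f : X →ₗ[Λ] Q, Injective f

/-- Membership in `C_Λ = Gen(Q̃) ∩ Cogen(Q̃)`. -/
def MemC (X : Type) [AddCommGroup X] [Module Λ X] : Prop :=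
  GenByProjInj Λ X ∧ CogenByProjInj Λ X

/-- `pdLEcat Λ n X` : `X` has projective dimension at most `n`. -/
def pdLEcat : ℕ → ModuleCat.{0} Λ → Prop
  | 0, X => Module.Projective Λ X
  | n+1, X => ∃ (P : ModuleCat.{0} Λ) (g : P →ₗ[Λ] X),
      Module.Projective Λ P ∧ Module.Finite Λ P ∧ Surjective g ∧
      pdLEcat n (ModuleCat.of Λ (↥(LinearMap.ker g)))

/-- Projective dimension at most `n`, for a bare module. -/
def pdLE (n : ℕ) (X : Type) [AddCommGroup X] [Module Λ X] : Prop :=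
  pdLEcat Λ n (ModuleCat.of Λ X)

/-- `idLEcat Λ n X` : `X` has injective dimension at most `n`. -/
def idLEcat : ℕ → ModuleCat.{0} Λ → Prop
  | 0, X => Module.Injective Λ X
  | n+1, X => ∃ (I : ModuleCat.{0} Λ) (f : X →ₗ[Λ] I),
      Module.Injective Λ I ∧ Injective f ∧
      idLEcat n (ModuleCat.of Λ (↥I ⧸ LinearMap.range f))

/-- Injective dimension at most `n`, for a bare module. -/
def idLE (n : ℕ) (X : Type) [AddCommGroup X] [Module Λ X] : Prop :=
  idLEcat Λ n (ModuleCat.of Λ X)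

/-- Global dimension at most `d` (on finitely generated modules). -/
def GlobalDimLE (d : ℕ) : Prop :=
  ∀ X : ModuleCat.{0} Λ, Module.Finite Λ X → pdLEcat Λ d X

/-- Global dimension exactly `d`. -/
def GlobalDimEq (d : ℕ) : Prop :=
  GlobalDimLE Λ d ∧ ∀ m, GlobalDimLE Λ m → d ≤ m

/-- `Ext¹_Λ(Y, X) = 0`, expressed by the splitting of all short exact sequences
`0 → X → E → Y → 0`. -/
def Ext1Vanish (Y X : Type) [AddCommGroup Y] [Module Λ Y]
    [AddCommGroup X] [Module Λ X] : Prop :=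
  ∀ (E : ModuleCat.{0} Λ) (f : X →ₗ[Λ] E) (g : E →ₗ[Λ] Y),
    Injective f → Surjective g → LinearMap.range f = LinearMap.ker g →
    ∃ r : E →ₗ[Λ] X, r ∘ₗ f = LinearMap.id

/-- `M` belongs to `add T`: `M` is a direct summand of a finite direct sum of copies of `T`. -/
def InAddOf (T M : Type) [AddCommGroup T] [Module Λ T]
    [AddCommGroup M] [Module Λ M] : Prop :=
  ∃ (m : ℕ) (p : (Fin m → T) →ₗ[Λ] M) (s : M →ₗ[Λ] (Fin m → T)),
    p ∘ₗ s = LinearMap.id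

/-- A (classical) tilting module. -/
def IsTilting (T : Type) [AddCommGroup T] [Module Λ T] : Prop :=
  pdLE Λ 1 T ∧ Ext1Vanish Λ T T ∧
  ∃ (T0 T1 : ModuleCat.{0} Λ) (f : Λ →ₗ[Λ] T0) (g : T0 →ₗ[Λ] T1),
    InAddOf Λ T T0 ∧ InAddOf Λ T T1 ∧ Injective f ∧ Surjective g ∧
    LinearMap.range f = LinearMap.ker g

/-- A (classical) cotilting module. -/
def IsCotilting (T : Type) [AddCommGroup T] [Module Λ T] : Prop :=
  idLE Λ 1 T ∧ Ext1Vanish Λ T T ∧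
  ∀ (I : ModuleCat.{0} Λ), Module.Finite Λ I → Module.Injective Λ I →
    ∃ (C0 C1 : ModuleCat.{0} Λ) (u : C0 →ₗ[Λ] C1) (v : C1 →ₗ[Λ] I),
      InAddOf Λ T C0 ∧ InAddOf Λ T C1 ∧ Injective u ∧ Surjective v ∧
      LinearMap.range u = LinearMap.ker v

/-- Dominant dimension at least `2`: there is an exact sequence `0 → Λ → Q₀ → Q₁`
with `Q₀, Q₁` projective-injective. -/
def DomdimGE2 : Prop :=
  ∃ (Q0 Q1 : ModuleCat.{0} Λ) (f : Λ →ₗ[Λ] Q0) (g : Q0 →ₗ[Λ] Q1),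
    Module.Finite Λ Q0 ∧ IsProjInj Λ Q0 ∧ Module.Finite Λ Q1 ∧ IsProjInj Λ Q1 ∧
    Injective f ∧ LinearMap.range f = LinearMap.ker g

/-- An indecomposable (nonzero) module: the only idempotent endomorphisms are `0` and `id`. -/
def Indecomposable (M : Type) [AddCommGroup M] [Module Λ M] : Prop :=
  (∃ x : M, x ≠ 0) ∧ ∀ e : M →ₗ[Λ] M, e ∘ₗ e = e → e = 0 ∨ e = LinearMap.id

/-- A right minimal morphism. -/
def RightMinimal {B C : Type} [AddCommGroup B] [Module Λ B] [AddCommGroup C] [Module Λ C]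
    (f : B →ₗ[Λ] C) : Prop :=
  ∀ g : B →ₗ[Λ] B, f ∘ₗ g = f → Bijective g

/-- A left minimal morphism. -/
def LeftMinimal {A B : Type} [AddCommGroup A] [Module Λ A] [AddCommGroup B] [Module Λ B]
    (f : A →ₗ[Λ] B) : Prop :=
  ∀ g : B →ₗ[Λ] B, g ∘ₗ f = f → Bijective g

/-- `f : P → X` is a projective cover: `P` is projective, `f` is surjective and its kernel
is superfluous. -/
def IsProjCover {P X : Type} [AddCommGroup P] [Module Λ P] [AddCommGroup X] [Module Λ X]
    (f : P →ₗ[Λ] X) : Prop :=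
  Module.Projective Λ P ∧ Surjective f ∧
    ∀ N : Submodule Λ P, N ⊔ LinearMap.ker f = ⊤ → N = ⊤

/-- `f : X → I` is an injective envelope: `I` is injective, `f` is injective and its image is
essential. -/
def IsInjEnv {X I : Type} [AddCommGroup X] [Module Λ X] [AddCommGroup I] [Module Λ I]
    (f : X →ₗ[Λ] I) : Prop :=
  Module.Injective Λ I ∧ Injective f ∧
    ∀ N : Submodule Λ I, N ⊓ LinearMap.range f = ⊥ → N = ⊥

/-- An essential submodule. -/
def IsEssentialSub {M : Type} [AddCommGroup M] [Module Λ M] (N : Submodule Λ M) : Prop :=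
  ∀ N' : Submodule Λ M, N ⊓ N' = ⊥ → N' = ⊥

/-- A uniserial module: submodules are totally ordered by inclusion. -/
def Uniserial (M : Type) [AddCommGroup M] [Module Λ M] : Prop :=
  ∀ N₁ N₂ : Submodule Λ M, N₁ ≤ N₂ ∨ N₂ ≤ N₁

/-- The radical of a module: the intersection of its maximal submodules. -/
def radSub (M : Type) [AddCommGroup M] [Module Λ M] : Submodule Λ M :=
  sInf {N : Submodule Λ M | IsCoatom N}

/-- An almost split (Auslander-Reiten) sequence `0 → A → E → C → 0`. -/
def IsAlmostSplitSeq {A E C : Type} [AddCommGroup A] [Module Λ A]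
    [AddCommGroup E] [Module Λ E] [AddCommGroup C] [Module Λ C]
    (f : A →ₗ[Λ] E) (g : E →ₗ[Λ] C) : Prop :=
  Injective f ∧ Surjective g ∧ LinearMap.range f = LinearMap.ker g ∧
  (¬∃ r : E →ₗ[Λ] A, r ∘ₗ f = LinearMap.id) ∧
  Indecomposable Λ A ∧ Indecomposable Λ C ∧
  ∀ (Z : ModuleCat.{0} Λ) (h : Z →ₗ[Λ] C), Module.Finite Λ Z →
    (¬∃ s : C →ₗ[Λ] Z, h ∘ₗ s = LinearMap.id) → ∃ l : (Z →ₗ[Λ] E), g ∘ₗ l = h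

/-- `N` is the Auslander-Reiten translate `τ M` of `M`: writing `M ≅ P ⊕ (⊕ᵢ Cᵢ)` with `P`
projective and `Cᵢ` indecomposable ends of almost split sequences `0 → Aᵢ → Eᵢ → Cᵢ → 0`,
we have `N ≅ ⊕ᵢ Aᵢ`. -/
def IsTauOf (N M : Type) [AddCommGroup N] [Module Λ N] [AddCommGroup M] [Module Λ M] : Prop :=
  ∃ (r : ℕ) (P : ModuleCat.{0} Λ) (A E C : Fin r → ModuleCat.{0} Λ)
    (f : ∀ i, (A i : Type) →ₗ[Λ] (E i : Type)) (g : ∀ i, (E i : Type) →ₗ[Λ] (C i : Type)),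
    Module.Projective Λ P ∧ (∀ i, IsAlmostSplitSeq Λ (f i) (g i)) ∧
    Nonempty (M ≃ₗ[Λ] (Prod (P : Type) ((i : Fin r) → (C i : Type)))) ∧
    Nonempty (N ≃ₗ[Λ] (∀ i, (A i : Type)))

end Prelim

section HomModule

variable {R : Type} [Ring R] {T M : Type} [AddCommGroup T] [Module R T]
  [AddCommGroup M] [Module R M]

/-- `Hom_R(T, M)` as a left module over `B = End_R(T)ᵒᵖ`, via precomposition. -/
instance instSMulHomEndOp : SMul (Module.End R T)ᵐᵒᵖ (T →ₗ[R] M) :=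
  ⟨fun b f => f ∘ₗ b.unop⟩

lemma endOp_smul_def (b : (Module.End R T)ᵐᵒᵖ) (f : T →ₗ[R] M) :
    b • f = f ∘ₗ b.unop := rfl

instance instMulActionHomEndOp : MulAction (Module.End R T)ᵐᵒᵖ (T →ₗ[R] M) where
  one_smul f := by ext x; rfl
  mul_smul b c f := by ext x; rfl

instance instDistribMulActionHomEndOp :
    DistribMulAction (Module.End R T)ᵐᵒᵖ (T →ₗ[R] M) where
  smul_zero b := by ext x; rfl
  smul_add b f g := by ext x; rfl

instance instModuleHomEndOp : Module (Module.End R T)ᵐᵒᵖ (T →ₗ[R] M) where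
  add_smul b c f := by ext x; simp [endOp_smul_def]
  zero_smul f := by ext x; simp [endOp_smul_def]

end HomModule

/-!
(⇐) If `0 → Λ → Q₀ → Q₁` is exact with `Qᵢ` projective-injective, take `T = Q₀ ⊕ Q₀/Λ`. It is
a quotient of `Q₀ ⊕ Q₀`, embeds into `Q₀ ⊕ Q₁`, and `0 → Λ → Q₀ ⊕ Q₀ → T → 0` gives `pd T ≤ 1`.
For `Ext¹(T, T) = 0` it suffices that every map `Λ → T` extends along `Λ → Q₀ ⊕ Q₀`: lift it to
the injective module `Q₀ ⊕ Q₀`, which maps onto `T`, and extend it there.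

(⇒) Given `0 → Λ → T₀ → T₁ → 0` with `T₀ ∈ Gen(Q̃)` and `T₁ ∈ Cogen(Q̃)`, lift `Λ → T₀` through
a surjection `P ↠ T₀` from a projective-injective `P` to `s : Λ → P`. The cokernel of `s` is an
extension of a submodule of `T₁` by `ker (P → T₀) ⊆ P`, hence embeds into a projective-injective
`Q₁`, which gives the exact sequence `0 → Λ → P → Q₁`.
-/

section

variable {Λ : Type} [Ring Λ]

instance Module.Injective.prod {M N : Type} [AddCommGroup M] [Module Λ M] [AddCommGroup N]
    [Module Λ N] [Module.Injective Λ M] [Module.Injective Λ N] : Module.Injective Λ (M × N) :=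
  ⟨fun X Y _ _ _ _ f hf g ↦ by
    obtain ⟨l₁, hl₁⟩ := Module.Injective.extension_property Λ M X Y f hf (fst Λ M N ∘ₗ g)
    obtain ⟨l₂, hl₂⟩ := Module.Injective.extension_property Λ N X Y f hf (snd Λ M N ∘ₗ g)
    exact ⟨l₁.prod l₂, fun x ↦ Prod.ext (LinearMap.congr_fun hl₁ x) (LinearMap.congr_fun hl₂ x)⟩⟩

instance Module.Projective.pi_of_finite {ι : Type} [Finite ι] {M : ι → Type}
    [∀ i, AddCommGroup (M i)] [∀ i, Module Λ (M i)] [∀ i, Module.Projective Λ (M i)] :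
    Module.Projective Λ (∀ i, M i) := by
  cases nonempty_fintype ι
  classical
  exact Module.Projective.of_equiv (DFinsupp.linearEquivFunOnFintype (R := Λ) (M := M))

section ProjInj

variable {M N : Type} [AddCommGroup M] [Module Λ M] [AddCommGroup N] [Module Λ N]

lemma IsProjInj.prod (hM : IsProjInj Λ M) (hN : IsProjInj Λ N) : IsProjInj Λ (M × N) := by
  obtain ⟨_, _⟩ := hM
  obtain ⟨_, _⟩ := hN
  exact ⟨inferInstance, inferInstance⟩

lemma IsProjInj.pi (hM : IsProjInj Λ M) (m : ℕ) : IsProjInj Λ (Fin m → M) := by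
  obtain ⟨_, _⟩ := hM
  exact ⟨inferInstance, inferInstance⟩

lemma GenByProjInj.of_isProjInj [Module.Finite Λ M] (hM : IsProjInj Λ M) : GenByProjInj Λ M :=
  ⟨ModuleCat.of Λ M, ‹_›, hM, LinearMap.id, surjective_id⟩

lemma CogenByProjInj.of_isProjInj [Module.Finite Λ M] (hM : IsProjInj Λ M) :
    CogenByProjInj Λ M :=
  ⟨ModuleCat.of Λ M, ‹_›, hM, LinearMap.id, injective_id⟩

lemma GenByProjInj.of_surjective (hM : GenByProjInj Λ M) (f : M →ₗ[Λ] N) (hf : Surjective f) :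
    GenByProjInj Λ N := by
  obtain ⟨Q, hQfin, hQ, q, hq⟩ := hM
  exact ⟨Q, hQfin, hQ, f ∘ₗ q, hf.comp hq⟩

lemma CogenByProjInj.of_injective (hN : CogenByProjInj Λ N) (f : M →ₗ[Λ] N) (hf : Injective f) :
    CogenByProjInj Λ M := by
  obtain ⟨Q, hQfin, hQ, q, hq⟩ := hN
  exact ⟨Q, hQfin, hQ, q ∘ₗ f, hq.comp hf⟩

lemma GenByProjInj.prod (hM : GenByProjInj Λ M) (hN : GenByProjInj Λ N) :
    GenByProjInj Λ (M × N) := by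
  obtain ⟨Q, _, hQ, q, hq⟩ := hM
  obtain ⟨Q', _, hQ', q', hq'⟩ := hN
  refine ⟨ModuleCat.of Λ (Q × Q'), inferInstance, hQ.prod hQ', q.prodMap q', ?_⟩
  rw [coe_prodMap]
  exact hq.prodMap hq'

lemma CogenByProjInj.prod (hM : CogenByProjInj Λ M) (hN : CogenByProjInj Λ N) :
    CogenByProjInj Λ (M × N) := by
  obtain ⟨Q, _, hQ, q, hq⟩ := hM
  obtain ⟨Q', _, hQ', q', hq'⟩ := hN
  refine ⟨ModuleCat.of Λ (Q × Q'), inferInstance, hQ.prod hQ', q.prodMap q', ?_⟩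
  rw [coe_prodMap]
  exact hq.prodMap hq'

lemma GenByProjInj.pi (hM : GenByProjInj Λ M) (m : ℕ) : GenByProjInj Λ (Fin m → M) := by
  obtain ⟨Q, _, hQ, q, hq⟩ := hM
  exact ⟨ModuleCat.of Λ (Fin m → Q), inferInstance, hQ.pi m, piMap fun _ ↦ q,
    Surjective.piMap fun _ ↦ hq⟩

lemma CogenByProjInj.pi (hM : CogenByProjInj Λ M) (m : ℕ) : CogenByProjInj Λ (Fin m → M) := by
  obtain ⟨Q, _, hQ, q, hq⟩ := hM
  exact ⟨ModuleCat.of Λ (Fin m → Q), inferInstance, hQ.pi m, piMap fun _ ↦ q,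
    Injective.piMap fun _ ↦ hq⟩

lemma GenByProjInj.of_inAddOf (hM : GenByProjInj Λ M) (hN : InAddOf Λ M N) :
    GenByProjInj Λ N := by
  obtain ⟨m, p, s, hps⟩ := hN
  exact (hM.pi m).of_surjective p (LeftInverse.surjective (LinearMap.congr_fun hps))

lemma CogenByProjInj.of_inAddOf (hM : CogenByProjInj Λ M) (hN : InAddOf Λ M N) :
    CogenByProjInj Λ N := by
  obtain ⟨m, p, s, hps⟩ := hN
  exact (hM.pi m).of_injective s (LeftInverse.injective (LinearMap.congr_fun hps))

end ProjInj

section Extensions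

variable {A B C : Type} [AddCommGroup A] [Module Λ A] [AddCommGroup B] [Module Λ B]
  [AddCommGroup C] [Module Λ C]

lemma CogenByProjInj.of_exact {f : A →ₗ[Λ] B} {g : B →ₗ[Λ] C} (hf : Injective f)
    (hfg : Exact f g) (hA : CogenByProjInj Λ A) (hC : CogenByProjInj Λ C) :
    CogenByProjInj Λ B := by
  obtain ⟨QA, _, hQA, u, hu⟩ := hA
  obtain ⟨QC, _, hQC, v, hv⟩ := hC
  have : Module.Injective Λ QA := hQA.2
  obtain ⟨U, hU⟩ := Module.Injective.extension_property Λ QA A B f hf u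
  refine ⟨ModuleCat.of Λ (QA × QC), inferInstance, hQA.prod hQC, U.prod (v ∘ₗ g),
    (injective_iff_map_eq_zero _).mpr fun b hb ↦ ?_⟩
  obtain ⟨a, rfl⟩ := (hfg b).mp (hv.eq_iff' (map_zero v) |>.mp (congr_arg Prod.snd hb))
  have hua : u a = 0 := by rw [← hU]; exact congr_arg Prod.fst hb
  rw [hu.eq_iff' (map_zero u) |>.mp hua, map_zero]

/-- The cokernel of `s` is an extension of a submodule of `N` by `ker π`. -/
lemma CogenByProjInj.quotient_range_of_comp_eq {M N P : Type} [AddCommGroup M] [Module Λ M]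
    [AddCommGroup N] [Module Λ N] [AddCommGroup P] [Module Λ P] {a : A →ₗ[Λ] M}
    {b : M →ₗ[Λ] N} (ha : Injective a) (hab : Exact a b) (π : P →ₗ[Λ] M) (s : A →ₗ[Λ] P)
    (hs : π ∘ₗ s = a) (hK : CogenByProjInj Λ (ker π)) (hN : CogenByProjInj Λ N) :
    CogenByProjInj Λ (P ⧸ range s) := by
  have hsa : ∀ x, π (s x) = a x := LinearMap.congr_fun hs
  have hle : range s ≤ ker (b ∘ₗ π) := by
    rintro _ ⟨x, rfl⟩
    simp [hsa, hab.apply_apply_eq_zero]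
  refine CogenByProjInj.of_exact (f := (range s).mkQ ∘ₗ (ker π).subtype)
    (g := (range s).liftQ (b ∘ₗ π) hle) ?_ ?_ hK hN
  · refine (injective_iff_map_eq_zero _).mpr fun ⟨w, hw⟩ h ↦ ?_
    obtain ⟨x, rfl⟩ : w ∈ range s := (Submodule.Quotient.mk_eq_zero _).mp h
    have : a x = 0 := by rw [← hsa]; exact hw
    simp [ha.eq_iff' (map_zero a) |>.mp this]
  · intro z
    obtain ⟨y, rfl⟩ := Submodule.mkQ_surjective _ z
    constructor
    · intro hy
      obtain ⟨x, hx⟩ := (hab (π y)).mp hy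
      refine ⟨⟨y - s x, by simp [hsa, hx]⟩, ?_⟩
      simp
    · rintro ⟨⟨w, hw⟩, hwy⟩
      rw [← hwy]
      simp [mem_ker.mp hw]

end Extensions

lemma domdimGE2_of_cogenByProjInj_quotient {Q : Type} [AddCommGroup Q] [Module Λ Q]
    [Module.Finite Λ Q] (hQ : IsProjInj Λ Q) (s : Λ →ₗ[Λ] Q) (hs : Injective s)
    (hC : CogenByProjInj Λ (Q ⧸ range s)) : DomdimGE2 Λ := by
  obtain ⟨Q', hQ'fin, hQ', v, hv⟩ := hC
  refine ⟨ModuleCat.of Λ Q, Q', s, v ∘ₗ (range s).mkQ, ‹_›, hQ, hQ'fin, hQ', hs, ?_⟩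
  rw [ker_comp_of_ker_eq_bot _ (ker_eq_bot.mpr hv), Submodule.ker_mkQ]

theorem domdimGE2_of_exact {M N : Type} [AddCommGroup M] [Module Λ M] [AddCommGroup N]
    [Module Λ N] {a : Λ →ₗ[Λ] M} {b : M →ₗ[Λ] N} (ha : Injective a) (hab : Exact a b)
    (hM : GenByProjInj Λ M) (hN : CogenByProjInj Λ N) : DomdimGE2 Λ := by
  obtain ⟨P, _, hP, π, hπ⟩ := hM
  obtain ⟨s, hs⟩ := Module.projective_lifting_property π a hπ
  have hs_inj : Injective s := by
    refine Injective.of_comp (f := π) ?_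
    rwa [← coe_comp, hs]
  have hK : CogenByProjInj Λ (ker π) :=
    (CogenByProjInj.of_isProjInj hP).of_injective _ (ker π).injective_subtype
  exact domdimGE2_of_cogenByProjInj_quotient hP s hs_inj
    (.quotient_range_of_comp_eq ha hab π s hs hK hN)

section Presentation

variable {K P X Y : Type} [AddCommGroup K] [Module Λ K] [AddCommGroup P] [Module Λ P]
  [AddCommGroup X] [Module Λ X] [AddCommGroup Y] [Module Λ Y]

lemma ext1Vanish_of_forall_exists_comp_eq [Module.Projective Λ P] {j : K →ₗ[Λ] P}
    {p : P →ₗ[Λ] Y} (hp : Surjective p) (hjp : Exact j p)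
    (hext : ∀ h : K →ₗ[Λ] X, ∃ H : P →ₗ[Λ] X, H ∘ₗ j = h) : Ext1Vanish Λ Y X := by
  intro E f g hf hg hfg
  replace hfg : Exact f g := LinearMap.exact_iff.mpr hfg.symm
  obtain ⟨φ, hφ⟩ := Module.projective_lifting_property g p hg
  have hφj : ∀ k, φ (j k) ∈ range f := fun k ↦
    (hfg _).mp (by rw [← LinearMap.comp_apply, hφ, hjp.apply_apply_eq_zero])
  obtain ⟨χ, hχ⟩ := hext ((LinearEquiv.ofInjective f hf).symm ∘ₗ codRestrict _ (φ ∘ₗ j) hφj)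
  have hfχ : ∀ k, f (χ (j k)) = φ (j k) := fun k ↦ by
    rw [← LinearMap.comp_apply χ j, hχ]
    exact LinearEquiv.ofInjective_symm_apply (f := f) (h := hf) (codRestrict _ (φ ∘ₗ j) hφj k)
  have hle : range j ≤ ker (φ - f ∘ₗ χ) := by
    rintro _ ⟨k, rfl⟩
    simp [hfχ]
  let σ : Y →ₗ[Λ] E :=
    (range j).liftQ (φ - f ∘ₗ χ) hle ∘ₗ (hjp.linearEquivOfSurjective hp).symm.toLinearMap
  have hσ : g ∘ₗ σ = LinearMap.id := by
    ext y
    obtain ⟨x, rfl⟩ := hp y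
    simp [σ, ← LinearMap.comp_apply g φ, hφ, hfg.apply_apply_eq_zero]
  have hsplit := hfg.split_tfae'.out 0 1
  exact (hsplit.mp ⟨hf, σ, hσ⟩).2

lemma pdLE_one_of_exact [Module.Projective Λ K] [Module.Projective Λ P] [Module.Finite Λ P]
    {j : K →ₗ[Λ] P} {p : P →ₗ[Λ] Y} (hj : Injective j) (hp : Surjective p) (hjp : Exact j p) :
    pdLE Λ 1 Y :=
  ⟨ModuleCat.of Λ P, p, ‹_›, ‹_›, hp, Module.Projective.of_equiv
    ((LinearEquiv.ofInjective j hj).trans (LinearEquiv.ofEq _ _ hjp.linearMap_ker_eq.symm))⟩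

end Presentation

lemma exists_comp_eq_of_surjective_of_injective {A B I M : Type} [AddCommGroup A] [Module Λ A]
    [AddCommGroup B] [Module Λ B] [AddCommGroup I] [Module Λ I] [AddCommGroup M] [Module Λ M]
    [Module.Projective Λ A] [Module.Injective Λ I] {π : I →ₗ[Λ] M} (hπ : Surjective π)
    {i : A →ₗ[Λ] B} (hi : Injective i) (h : A →ₗ[Λ] M) : ∃ H : B →ₗ[Λ] M, H ∘ₗ i = h := by
  obtain ⟨h', hh'⟩ := Module.projective_lifting_property π h hπ
  obtain ⟨H, hH⟩ := Module.Injective.extension_property Λ I A B i hi h'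
  exact ⟨π ∘ₗ H, by rw [LinearMap.comp_assoc, hH, hh']⟩

lemma inAddOf_prod_left (M N : Type) [AddCommGroup M] [Module Λ M] [AddCommGroup N]
    [Module Λ N] : InAddOf Λ (M × N) M :=
  ⟨1, fst Λ M N ∘ₗ proj 0, pi fun _ ↦ inl Λ M N, rfl⟩

lemma inAddOf_prod_right (M N : Type) [AddCommGroup M] [Module Λ M] [AddCommGroup N]
    [Module Λ N] : InAddOf Λ (M × N) N :=
  ⟨1, snd Λ M N ∘ₗ proj 0, pi fun _ ↦ inr Λ M N, rfl⟩

section DomdimTwo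

variable {Q : Type} [AddCommGroup Q] [Module Λ Q] {ι : Λ →ₗ[Λ] Q}

lemma exact_inr_comp_prodMap_mkQ :
    Exact (inr Λ Q Q ∘ₗ ι) ((LinearMap.id : Q →ₗ[Λ] Q).prodMap (range ι).mkQ) := by
  rw [LinearMap.exact_iff, ker_prodMap, ker_id, Submodule.ker_mkQ, range_comp,
    Submodule.map_inr]

lemma surjective_prodMap_mkQ :
    Surjective ((LinearMap.id : Q →ₗ[Λ] Q).prodMap (range ι).mkQ) := by
  rw [coe_prodMap]
  exact surjective_id.prodMap (Submodule.mkQ_surjective _)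

lemma isTilting_prod_quotient [Module.Finite Λ Q] (hQ : IsProjInj Λ Q) (hι : Injective ι) :
    IsTilting Λ (Q × (Q ⧸ range ι)) := by
  obtain ⟨_, _⟩ := hQ
  have hj : Injective (inr Λ Q Q ∘ₗ ι) := inr_injective.comp hι
  refine ⟨pdLE_one_of_exact hj surjective_prodMap_mkQ exact_inr_comp_prodMap_mkQ,
    ext1Vanish_of_forall_exists_comp_eq surjective_prodMap_mkQ exact_inr_comp_prodMap_mkQ
      fun h ↦ exists_comp_eq_of_surjective_of_injective surjective_prodMap_mkQ hj h,
    ModuleCat.of Λ Q, ModuleCat.of Λ (Q ⧸ range ι), ι, (range ι).mkQ,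
    inAddOf_prod_left _ _, inAddOf_prod_right _ _, hι, Submodule.mkQ_surjective _,
    (Submodule.ker_mkQ _).symm⟩

lemma memC_prod_quotient [Module.Finite Λ Q] (hQ : IsProjInj Λ Q) {Q' : Type} [AddCommGroup Q']
    [Module Λ Q'] [Module.Finite Λ Q'] (hQ' : IsProjInj Λ Q') {g : Q →ₗ[Λ] Q'}
    (hιg : Exact ι g) : MemC Λ (Q × (Q ⧸ range ι)) :=
  ⟨(GenByProjInj.of_isProjInj hQ).prod
      ((GenByProjInj.of_isProjInj hQ).of_surjective _ (Submodule.mkQ_surjective _)),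
    (CogenByProjInj.of_isProjInj hQ).prod
      ((CogenByProjInj.of_isProjInj hQ').of_injective _ (injective_range_liftQ_of_exact hιg))⟩

end DomdimTwo

theorem exists_isTilting_memC_of_domdimGE2 (h : DomdimGE2 Λ) :
    ∃ T : ModuleCat.{0} Λ, Module.Finite Λ T ∧ IsTilting Λ T ∧ MemC Λ T := by
  obtain ⟨Q, Q', ι, g, _, hQ, _, hQ', hι, hιg⟩ := h
  exact ⟨ModuleCat.of Λ (Q × (Q ⧸ range ι)), inferInstance, isTilting_prod_quotient hQ hι,
    memC_prod_quotient hQ hQ' (LinearMap.exact_iff.mpr hιg.symm)⟩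

end

theorem stmt10_general (Λ : Type) [Ring Λ] :
    (∃ T : ModuleCat.{0} Λ, Module.Finite Λ T ∧ IsTilting Λ T ∧ MemC Λ T) ↔
    DomdimGE2 Λ := by
  refine ⟨?_, exists_isTilting_memC_of_domdimGE2⟩
  rintro ⟨T, -, ⟨-, -, T₀, T₁, a, b, hT₀, hT₁, ha, -, hab⟩, hgen, hcogen⟩
  exact domdimGE2_of_exact ha (LinearMap.exact_iff.mpr hab.symm) (hgen.of_inAddOf hT₀)
    (hcogen.of_inAddOf hT₁)

theorem stmt10 (Λ : Type) [Ring Λ] (k : Type) [CommRing k] [IsArtinianRing k] [Algebra k Λ]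
    [Module.Finite k Λ] :
    (∃ T : ModuleCat.{0} Λ, Module.Finite Λ T ∧ IsTilting Λ T ∧ MemC Λ T) ↔
    DomdimGE2 Λ :=
  stmt10_general Λ
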